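/- For any two positive integers r and s and any two rooted trees T_1 and T_2, if Duplicator wins the game ehr[T_1, T_2, s+1; r] (with (s+1)·r rounds and a forced switch after every r rounds), then Duplicator also wins the game EHR[T_1, T_2, s, r] (with r rounds and at most s switches chosen freely by Spoiler). -/

import Mathlib

/-! ## Rooted trees -/

/-- A rooted tree structure: a vertex type, a root, and a parent map
(`parent v = none` is intended to hold exactly when `v` is the root). -/
structure RTree where
  V : Type
  root : V
  parent : V → Option V

namespace RTree

/-- Iterate the parent map `n` times. -/
def parentIter (T : RTree) : ℕ → T.V → Option T.V
  | 0, v => some v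
  | n + 1, v => (T.parent v).bind (T.parentIter n)

/-- `u` is a descendant of `v` (possibly `u = v`). -/
def IsDesc (T : RTree) (v u : T.V) : Prop :=
  ∃ n, T.parentIter n u = some v

/-- The structure is a genuine rooted, locally finite tree:
exactly the root has no parent, every vertex reaches the root by iterating
the parent map (connectivity and acyclicity), and every vertex has finitely
many children (local finiteness). -/
def IsTree (T : RTree) : Prop :=
  (∀ v, T.parent v = none ↔ v = T.root) ∧
  (∀ v, ∃ n, T.parentIter n v = some T.root) ∧
  (∀ v, {u | T.parent u = some v}.Finite)

open Classical in
/-- The subtree `T(v)` consisting of `v` and all its descendants, rooted at `v`. -/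
noncomputable def subtree (T : RTree) (v : T.V) : RTree where
  V := {u : T.V // T.IsDesc v u}
  root := ⟨v, 0, rfl⟩
  parent u :=
    if u.1 = v then none
    else (T.parent u.1).bind fun w =>
      if h : T.IsDesc v w then some ⟨w, h⟩ else none

end RTree

/-- An isomorphism of rooted trees: a bijection of vertices mapping root to
root and commuting with the parent maps. -/
structure TreeIso (S T : RTree) where
  toEquiv : S.V ≃ T.V
  map_root : toEquiv S.root = T.root
  map_parent : ∀ v, (S.parent v).map toEquiv = T.parent (toEquiv v)

/-! ## First-order logic of rooted trees -/

/-- Terms: variables (de Bruijn indices) and the constant `R` for the root. -/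
inductive FOTerm where
  | var : ℕ → FOTerm
  | root : FOTerm
deriving DecidableEq

/-- First-order formulas in the language of rooted trees: equality `x = y`,
the parent relation `parentOf t t'` (meaning `π(t') = t`, i.e. `t` is the
parent of `t'`), Boolean connectives, and quantifiers (de Bruijn style). -/
inductive FOFormula where
  | eq : FOTerm → FOTerm → FOFormula
  | parentOf : FOTerm → FOTerm → FOFormula
  | not : FOFormula → FOFormula
  | and : FOFormula → FOFormula → FOFormula
  | or : FOFormula → FOFormula → FOFormula
  | imp : FOFormula → FOFormula → FOFormula
  | all : FOFormula → FOFormula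
  | ex : FOFormula → FOFormula
deriving DecidableEq

namespace FOTerm

def eval (T : RTree) (env : ℕ → T.V) : FOTerm → T.V
  | var n => env n
  | root => T.root

def freeBound : FOTerm → ℕ
  | var n => n + 1
  | root => 0

end FOTerm

/-- Kinds of quantifiers, used to count alternations. -/
inductive QKind where
  | ex | all
deriving DecidableEq

/-- The dual of a quantifier kind. -/
def QKind.dual : QKind → QKind
  | .ex => .all
  | .all => .ex

namespace FOFormula

/-- Satisfaction of a formula in a rooted tree under an environment. -/
def Sat (T : RTree) : FOFormula → (ℕ → T.V) → Prop
  | eq t₁ t₂, env => t₁.eval T env = t₂.eval T env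
  | parentOf t₁ t₂, env => T.parent (t₂.eval T env) = some (t₁.eval T env)
  | not φ, env => ¬ φ.Sat T env
  | and φ ψ, env => φ.Sat T env ∧ ψ.Sat T env
  | or φ ψ, env => φ.Sat T env ∨ ψ.Sat T env
  | imp φ ψ, env => φ.Sat T env → ψ.Sat T env
  | all φ, env => ∀ w : T.V, φ.Sat T (fun n => match n with | 0 => w | Nat.succ k => env k)
  | ex φ, env => ∃ w : T.V, φ.Sat T (fun n => match n with | 0 => w | Nat.succ k => env k)

/-- Quantifier depth: the maximum number of nested quantifiers. -/
def qd : FOFormula → ℕ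
  | eq _ _ => 0
  | parentOf _ _ => 0
  | not φ => φ.qd
  | and φ ψ => max φ.qd ψ.qd
  | or φ ψ => max φ.qd ψ.qd
  | imp φ ψ => max φ.qd ψ.qd
  | all φ => φ.qd + 1
  | ex φ => φ.qd + 1

/-- Auxiliary alternation count: `aqdAux φ pol q` is the maximum number of
alternations between (effectively) existential and universal quantifiers along
a nested quantifier sequence of `φ`, given the current polarity `pol`
(`true` = positive; negations and antecedents of implications flip it, so that
e.g. a `∀` under a negation counts as an `∃`) and the effective kind `q` of
the innermost enclosing quantifier (if any). -/
def aqdAux : FOFormula → Bool → Option QKind → ℕ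
  | eq _ _, _, _ => 0
  | parentOf _ _, _, _ => 0
  | not φ, pol, q => φ.aqdAux (!pol) q
  | and φ ψ, pol, q => max (φ.aqdAux pol q) (ψ.aqdAux pol q)
  | or φ ψ, pol, q => max (φ.aqdAux pol q) (ψ.aqdAux pol q)
  | imp φ ψ, pol, q => max (φ.aqdAux (!pol) q) (ψ.aqdAux pol q)
  | all φ, pol, q =>
      (if q = some (if pol then QKind.ex else QKind.all) then 1 else 0) +
        φ.aqdAux pol (some (if pol then QKind.all else QKind.ex))
  | ex φ, pol, q =>
      (if q = some (if pol then QKind.all else QKind.ex) then 1 else 0) +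
        φ.aqdAux pol (some (if pol then QKind.ex else QKind.all))

/-- The number of alternations of quantifiers of a formula: the maximum number
of switches between (effectively) existential and universal quantifiers in a
nested quantifier sequence.  Purely existential or purely universal formulas
have `aqd = 0`. -/
def aqd (φ : FOFormula) : ℕ := φ.aqdAux true none

/-- A bound on the free variables of a formula: all free de Bruijn indices
are `< freeBound`. -/
def freeBound : FOFormula → ℕ
  | eq t₁ t₂ => max t₁.freeBound t₂.freeBound
  | parentOf t₁ t₂ => max t₁.freeBound t₂.freeBound
  | not φ => φ.freeBound
  | and φ ψ => max φ.freeBound ψ.freeBound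
  | or φ ψ => max φ.freeBound ψ.freeBound
  | imp φ ψ => max φ.freeBound ψ.freeBound
  | all φ => φ.freeBound - 1
  | ex φ => φ.freeBound - 1

/-- A sentence is a formula with no free variables. -/
def IsSentence (φ : FOFormula) : Prop := φ.freeBound = 0

end FOFormula

/-- A (closed) formula holds in a rooted tree. -/
def Models (T : RTree) (φ : FOFormula) : Prop :=
  φ.Sat T (fun _ => T.root)

/-- The formula `P_i(x)`, with free variable `x` being de Bruijn index `0`:
`P_0(x) = ∀ y ¬(π(y) = x)` and `P_{i+1}(x) = ∀ y (π(y) = x → ¬ P_i(y))`. -/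
def Pform : ℕ → FOFormula
  | 0 => .all (.not (.parentOf (.var 1) (.var 0)))
  | i + 1 => .all (.imp (.parentOf (.var 1) (.var 0)) (.not (Pform i)))

/-- The sentence `KEIN_i = P_i(R)`. -/
def KEIN : ℕ → FOFormula
  | 0 => .all (.not (.parentOf .root (.var 0)))
  | i + 1 => .all (.imp (.parentOf .root (.var 0)) (.not (Pform i)))

/-! ## Ehrenfeucht games -/

/-- The winning condition for Duplicator: for all pairs `(x_i, y_i)`, `(x_j, y_j)`
in the list of selected/designated pairs, (Main 1) `π(x_j) = x_i ↔ π(y_j) = y_i`,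
and (Main 2) `x_i = x_j ↔ y_i = y_j`. -/
def GoodPairs (T₁ T₂ : RTree) (ps : List (T₁.V × T₂.V)) : Prop :=
  ∀ p ∈ ps, ∀ q ∈ ps,
    (T₁.parent p.1 = some q.1 ↔ T₂.parent p.2 = some q.2) ∧
    (p.1 = q.1 ↔ p.2 = q.2)

/-- Duplicator wins the scheduled Ehrenfeucht game on `T₁, T₂` in which Spoiler
must play his moves in consecutive batches, the batch sizes given by the list
`sched`, switching trees after each batch; `side = true` means Spoiler currently
plays on `T₁` (Duplicator answering on `T₂`), `side = false` means Spoiler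
currently plays on `T₂`.  The list `ps` records the pairs selected so far
(including designated pairs and the pair of roots); Duplicator wins when the
final configuration satisfies `GoodPairs`. -/
def DupWinsSched (T₁ T₂ : RTree) : List ℕ → Bool → List (T₁.V × T₂.V) → Prop
  | [], _, ps => GoodPairs T₁ T₂ ps
  | 0 :: rest, side, ps => DupWinsSched T₁ T₂ rest (!side) ps
  | (n + 1) :: rest, side, ps =>
      if side then
        ∀ x : T₁.V, ∃ y : T₂.V, DupWinsSched T₁ T₂ (n :: rest) side ((x, y) :: ps)
      else
        ∀ y : T₂.V, ∃ x : T₁.V, DupWinsSched T₁ T₂ (n :: rest) side ((x, y) :: ps)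
termination_by sched _ _ => (sched.length, sched.sum)
decreasing_by
  all_goals
    first
      | exact Prod.Lex.left _ _ (Nat.lt_succ_self _)
      | exact Prod.Lex.right _ (by simp [List.sum_cons])

/-- The cost (in switches) for Spoiler of playing on side `side` when his
previous move (if any) was on side `last`. -/
def switchCost (last : Option Bool) (side : Bool) : ℕ :=
  match last with
  | none => 0
  | some b => if b = side then 0 else 1

/-- Duplicator wins the Ehrenfeucht game `EHR` with `rounds` remaining rounds,
`sw` remaining switches allowed to Spoiler, `last` the side on which Spoiler
made his previous move (if any), and `ps` the pairs selected so far.  In each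
round Spoiler picks a side (paying a switch if he changes trees, which he may
do only if he has switches left) and a vertex in that tree, and Duplicator
answers in the other tree. -/
def DupWinsEHRAux (T₁ T₂ : RTree) :
    ℕ → ℕ → Option Bool → List (T₁.V × T₂.V) → Prop
  | 0, _, _, ps => GoodPairs T₁ T₂ ps
  | r + 1, sw, last, ps =>
      ∀ side : Bool, switchCost last side ≤ sw →
        if side then
          ∀ x : T₁.V, ∃ y : T₂.V,
            DupWinsEHRAux T₁ T₂ r (sw - switchCost last side) (some side) ((x, y) :: ps)
        else
          ∀ y : T₂.V, ∃ x : T₁.V,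
            DupWinsEHRAux T₁ T₂ r (sw - switchCost last side) (some side) ((x, y) :: ps)

/-- Duplicator wins the game `EHR[T₁, T₂, s, r]`: `r` rounds, Spoiler may start
on either tree and make at most `s` switches. -/
def DupWinsEHR (T₁ T₂ : RTree) (s r : ℕ) : Prop :=
  DupWinsEHRAux T₁ T₂ r s none [(T₁.root, T₂.root)]

/-! ## The trees `T₁^{(s,k,m)}` and `T₂^{(s,k,m)}` -/

/-- The one-vertex rooted tree. -/
def single : RTree where
  V := PUnit
  root := PUnit.unit
  parent := fun _ => none

/-- Hang the trees `f 0, …, f (n-1)` from a new root: the root of each `f i`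
becomes a child of the new root. -/
def hang (n : ℕ) (f : Fin n → RTree) : RTree where
  V := Unit ⊕ (Σ i : Fin n, (f i).V)
  root := Sum.inl ()
  parent := fun x =>
    match x with
    | Sum.inl _ => none
    | Sum.inr ⟨i, w⟩ =>
      match (f i).parent w with
      | none => some (Sum.inl ())
      | some w' => some (Sum.inr ⟨i, w'⟩)

/-- The pair of trees `(T₁^{(s,k,m)}, T₂^{(s,k,m)})`, indexed by `s` (the
parameter `k` plays no role in the construction).  Conventions for `s = 0`:
`T₁^{(0)}` is a single vertex and `T₂^{(0)}` is a star of `m` childless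
children.  For `s ≥ 1`: in `T₁^{(s+1)}` the root has `m+1` children, from each
of which hangs a copy of `T₂^{(s)}`; in `T₂^{(s+1)}` the root has `m+1`
children, from `m` of which hangs a copy of `T₂^{(s)}` and from the remaining
one hangs a copy of `T₁^{(s)}`. -/
def TreePair (m : ℕ) : ℕ → RTree × RTree
  | 0 => (single, hang m fun _ => single)
  | s + 1 =>
      (hang (m + 1) fun _ => (TreePair m s).2,
       hang (m + 1) fun i => if i.1 = m then (TreePair m s).1 else (TreePair m s).2)

/-- The tree `T₁^{(s,k,m)}`. -/
def Tree1 (s k m : ℕ) : RTree := (TreePair m s).1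

/-- The tree `T₂^{(s,k,m)}`. -/
def Tree2 (s k m : ℕ) : RTree := (TreePair m s).2

/-! Duplicator answers every move of the free game with her strategy for the scheduled game.
Moves on the current tree use up the current batch. A switch is simulated by letting Spoiler
waste the rest of the current batch, and the first moves of the next one, on arbitrary vertices:
pairs played only enlarge the final configuration, and a subconfiguration of a good one is good.
Since the free game has only `r` rounds and at most `s` switches, the `s + 1` batches of `r`
moves suffice. -/

section Games

variable {T₁ T₂ : RTree}

def CanAnswer (T₁ T₂ : RTree) (side : Bool) (P : T₁.V × T₂.V → Prop) : Prop :=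
  if side then ∀ x, ∃ y, P (x, y) else ∀ y, ∃ x, P (x, y)

theorem CanAnswer.mono {side : Bool} {P Q : T₁.V × T₂.V → Prop} (hPQ : ∀ p, P p → Q p)
    (h : CanAnswer T₁ T₂ side P) : CanAnswer T₁ T₂ side Q := by
  cases side
  · exact fun y => (h y).imp fun x => hPQ _
  · exact fun x => (h x).imp fun y => hPQ _

theorem CanAnswer.exists {side : Bool} {P : T₁.V × T₂.V → Prop} (h : CanAnswer T₁ T₂ side P) :
    ∃ p, P p := by
  cases side
  · obtain ⟨x, hx⟩ := h T₂.root
    exact ⟨_, hx⟩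
  · obtain ⟨y, hy⟩ := h T₁.root
    exact ⟨_, hy⟩

theorem switchCost_some_self (b : Bool) : switchCost (some b) b = 0 :=
  if_pos rfl

theorem switchCost_some_not (b : Bool) : switchCost (some b) (!b) = 1 := by
  cases b <;> rfl

theorem GoodPairs.mono {ps ps' : List (T₁.V × T₂.V)} (hps : ps ⊆ ps') (h : GoodPairs T₁ T₂ ps') :
    GoodPairs T₁ T₂ ps :=
  fun p hp q hq => h p (hps hp) q (hps hq)

theorem dupWinsSched_succ_cons {n : ℕ} {rest : List ℕ} {side : Bool} {ps : List (T₁.V × T₂.V)} :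
    DupWinsSched T₁ T₂ ((n + 1) :: rest) side ps ↔
      CanAnswer T₁ T₂ side fun p => DupWinsSched T₁ T₂ (n :: rest) side (p :: ps) := by
  rw [DupWinsSched]
  rfl

theorem dupWinsEHRAux_succ {r sw : ℕ} {last : Option Bool} {ps : List (T₁.V × T₂.V)} :
    DupWinsEHRAux T₁ T₂ (r + 1) sw last ps ↔
      ∀ side, switchCost last side ≤ sw → CanAnswer T₁ T₂ side fun p =>
        DupWinsEHRAux T₁ T₂ r (sw - switchCost last side) (some side) (p :: ps) := by
  rw [DupWinsEHRAux]
  rfl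

theorem DupWinsSched.mono {sched : List ℕ} {side : Bool} {ps ps' : List (T₁.V × T₂.V)}
    (hps : ps ⊆ ps') (h : DupWinsSched T₁ T₂ sched side ps') :
    DupWinsSched T₁ T₂ sched side ps := by
  induction sched generalizing side ps ps' with
  | nil =>
    rw [DupWinsSched] at h ⊢
    exact h.mono hps
  | cons n rest ih =>
    induction n generalizing side ps ps' with
    | zero =>
      rw [DupWinsSched] at h ⊢
      exact ih hps h
    | succ n ihn =>
      rw [dupWinsSched_succ_cons] at h ⊢
      exact h.mono fun p => ihn (List.cons_subset_cons p hps)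

theorem DupWinsSched.of_succ_cons {n : ℕ} {rest : List ℕ} {side : Bool}
    {ps : List (T₁.V × T₂.V)} (h : DupWinsSched T₁ T₂ ((n + 1) :: rest) side ps) :
    DupWinsSched T₁ T₂ (n :: rest) side ps := by
  obtain ⟨p, hp⟩ := (dupWinsSched_succ_cons.1 h).exists
  exact hp.mono (List.subset_cons_self p ps)

theorem DupWinsSched.of_le_head {m n : ℕ} {rest : List ℕ} {side : Bool}
    {ps : List (T₁.V × T₂.V)} (hnm : n ≤ m) (h : DupWinsSched T₁ T₂ (m :: rest) side ps) :
    DupWinsSched T₁ T₂ (n :: rest) side ps := by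
  induction hnm with
  | refl => exact h
  | step _ ih => exact ih h.of_succ_cons

theorem DupWinsSched.tail {n : ℕ} {rest : List ℕ} {side : Bool} {ps : List (T₁.V × T₂.V)}
    (h : DupWinsSched T₁ T₂ (n :: rest) side ps) : DupWinsSched T₁ T₂ rest (!side) ps := by
  have h₀ := h.of_le_head (Nat.zero_le n)
  rwa [DupWinsSched] at h₀

theorem DupWinsSched.goodPairs {sched : List ℕ} {side : Bool} {ps : List (T₁.V × T₂.V)}
    (h : DupWinsSched T₁ T₂ sched side ps) : GoodPairs T₁ T₂ ps := by
  induction sched generalizing side with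
  | nil => rwa [DupWinsSched] at h
  | cons n rest ih => exact ih h.tail

theorem dupWinsEHRAux_of_dupWinsSched {r n sw : ℕ} {b : Bool} {ps : List (T₁.V × T₂.V)}
    (hn : n ≤ r) (h : DupWinsSched T₁ T₂ (n :: List.replicate sw r) b ps) :
    DupWinsEHRAux T₁ T₂ n sw (some b) ps := by
  induction n generalizing sw b ps with
  | zero =>
    rw [DupWinsEHRAux]
    exact h.goodPairs
  | succ n ih =>
    rw [dupWinsEHRAux_succ]
    intro side hcost
    rcases eq_or_ne side b with rfl | hswitch
    · rw [switchCost_some_self, Nat.sub_zero]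
      exact (dupWinsSched_succ_cons.1 h).mono fun _ => ih (by omega)
    · obtain rfl : side = !b := by cases side <;> cases b <;> simp_all
      rw [switchCost_some_not] at hcost ⊢
      -- Spoiler wastes the rest of the current batch and all but `n + 1` moves of the next one.
      obtain ⟨sw, rfl⟩ : ∃ k, sw = k + 1 := ⟨sw - 1, by omega⟩
      have hnext : DupWinsSched T₁ T₂ ((n + 1) :: List.replicate sw r) (!b) ps :=
        (show DupWinsSched T₁ T₂ (r :: List.replicate sw r) (!b) ps from h.tail).of_le_head hn
      exact (dupWinsSched_succ_cons.1 hnext).mono fun _ => ih (by omega)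

theorem dupWinsEHRAux_none_of_forall_some {r sw : ℕ} {ps : List (T₁.V × T₂.V)}
    (h : ∀ b, DupWinsEHRAux T₁ T₂ r sw (some b) ps) : DupWinsEHRAux T₁ T₂ r sw none ps := by
  cases r with
  | zero => exact h true
  | succ r =>
    rw [dupWinsEHRAux_succ]
    intro side _
    have hmove :=
      dupWinsEHRAux_succ.1 (h side) side ((switchCost_some_self side).trans_le sw.zero_le)
    rwa [switchCost_some_self] at hmove

end Games

theorem sched_win_implies_EHR_win_general (T₁ T₂ : RTree)
    (r s : ℕ)
    (h : ∀ side : Bool,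
        DupWinsSched T₁ T₂ (List.replicate (s + 1) r) side [(T₁.root, T₂.root)]) :
    DupWinsEHR T₁ T₂ s r :=
  dupWinsEHRAux_none_of_forall_some fun b => dupWinsEHRAux_of_dupWinsSched le_rfl (h b)

/-- If Duplicator wins `ehr[T₁, T₂, s+1; r]` (with `(s+1)·r`
rounds and a forced switch after every `r` rounds, Spoiler choosing the
starting tree), then she also wins `EHR[T₁, T₂, s, r]` (with `r` rounds and at
most `s` switches chosen freely by Spoiler). -/
theorem sched_win_implies_EHR_win (T₁ T₂ : RTree) (h₁ : T₁.IsTree) (h₂ : T₂.IsTree)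
    (r s : ℕ) (hr : 0 < r) (hs : 0 < s)
    (h : ∀ side : Bool,
        DupWinsSched T₁ T₂ (List.replicate (s + 1) r) side [(T₁.root, T₂.root)]) :
    DupWinsEHR T₁ T₂ s r :=
  sched_win_implies_EHR_win_general T₁ T₂ r s h
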